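/- arXiv:1311.2648 — 6 statements merged into one kernel-verified Lean document; each statement's English description precedes it below -/
import Mathlib

section
/- Let G be an abelian group and F a self-indulgent downward directed family of subsets of G such that for every g ∈ G with g ≠ 0 and every integer n ≥ 1 there exists S ∈ F with g ∉ n·S*. Suppose g ∈ G with g ≠ 0, n ≥ 0, and S₀, …, S_{n−1} are members of F such that g ∉ S₀* + ⋯ + S_{n−1}*. Then there exists S_n ∈ F such that g ∉ S₀* + ⋯ + S_{n−1}* + S_n*. -/
/-!
Suppose every `T ∈ F` admits a decomposition `g = y₀(T) + ⋯ + y_{n-1}(T) + t` with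
`yᵢ(T) ∈ Sᵢ*` and `t ∈ T*`. Applying self-indulgence once per coordinate, the nets
`T ↦ yᵢ(T)` converge strongly to some `aᵢ ∈ Sᵢ*` along one common cofinal subfamily. For
every `U ∈ F`, choosing `T ⊆ U` far enough along it writes `g - ∑ aᵢ` as the remainder `t ∈ U*`
plus the `n` differences `yᵢ(T) - aᵢ ∈ U*`, so `g - ∑ aᵢ ∈ (n + 1)·U*` for all `U`; hence
`g = ∑ aᵢ ∈ S₀* + ⋯ + S_{n-1}*`.
-/

open Pointwise

/-- `S* = S ∪ {0} ∪ (-S)`. -/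
def Sstar {G : Type*} [AddCommGroup G] (S : Set G) : Set G := S ∪ {0} ∪ (-S)

/-- `F` is downward directed. -/
def DownDirected {G : Type*} [AddCommGroup G] (F : Set (Set G)) : Prop :=
  ∀ S₁ ∈ F, ∀ S₂ ∈ F, ∃ S₃ ∈ F, S₃ ⊆ S₁ ∩ S₂

/-- `F'` is a downward cofinal subset of `F` (ordered by inclusion). -/
def DownCofinal {G : Type*} [AddCommGroup G] (F' F : Set (Set G)) : Prop :=
  F' ⊆ F ∧ ∀ S ∈ F, ∃ T ∈ F', T ⊆ S

/-- The family `(x T)_{T ∈ F''}`, indexed by `F''` ordered (downward) by inclusion,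
converges strongly to `a` with respect to `F`. -/
def ConvStrong {G : Type*} [AddCommGroup G] (F F'' : Set (Set G)) (x : Set G → G)
    (a : G) : Prop :=
  ∀ S ∈ F, ∃ T ∈ F'', ∀ T' ∈ F'', T' ⊆ T → x T' - a ∈ Sstar S

/-- `F` is self-indulgent. -/
def SelfIndulgent {G : Type*} [AddCommGroup G] (F : Set (Set G)) : Prop :=
  ∀ S ∈ F, ∀ F' : Set (Set G), DownCofinal F' F →
    ∀ x : Set G → G, (∀ T ∈ F', x T ∈ Sstar S) →
      ∃ a ∈ Sstar S, ∃ F'' : Set (Set G), DownCofinal F'' F' ∧ ConvStrong F F'' x a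

section

variable {G : Type*} [AddCommGroup G]

lemma sstar_mono {S T : Set G} (h : S ⊆ T) : Sstar S ⊆ Sstar T :=
  Set.union_subset_union (Set.union_subset_union_left _ h) (Set.neg_subset_neg.2 h)

lemma DownCofinal.refl (F : Set (Set G)) : DownCofinal F F :=
  ⟨subset_rfl, fun S hS => ⟨S, hS, subset_rfl⟩⟩

lemma DownCofinal.trans {F'' F' F : Set (Set G)} (h₁ : DownCofinal F'' F')
    (h₂ : DownCofinal F' F) : DownCofinal F'' F := by
  refine ⟨h₁.1.trans h₂.1, fun U hU => ?_⟩
  obtain ⟨T, hT, hTU⟩ := h₂.2 U hU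
  obtain ⟨T', hT', hT'T⟩ := h₁.2 T hT
  exact ⟨T', hT', hT'T.trans hTU⟩

lemma ConvStrong.of_downCofinal {F F' F'' : Set (Set G)} {x : Set G → G} {a : G}
    (h : ConvStrong F F' x a) (hF'' : DownCofinal F'' F') : ConvStrong F F'' x a := by
  intro U hU
  obtain ⟨T₀, hT₀, hconv⟩ := h U hU
  obtain ⟨T, hT, hTT₀⟩ := hF''.2 T₀ hT₀
  exact ⟨T, hT, fun T' hT' hT'T => hconv T' (hF''.1 hT') (hT'T.trans hTT₀)⟩

lemma DownDirected.exists_subset_forall_subset {ι : Type*} {F : Set (Set G)}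
    (hdir : DownDirected F) {B : Set G} (hB : B ∈ F) (s : Finset ι) (t : ι → Set G)
    (ht : ∀ i ∈ s, t i ∈ F) : ∃ V ∈ F, V ⊆ B ∧ ∀ i ∈ s, V ⊆ t i := by
  classical
  induction s using Finset.induction_on with
  | empty => exact ⟨B, hB, subset_rfl, by simp⟩
  | insert j s _ ih =>
    obtain ⟨V, hV, hVB, hVt⟩ := ih fun i hi => ht i (Finset.mem_insert_of_mem hi)
    obtain ⟨W, hW, hWsub⟩ := hdir V hV (t j) (ht j (Finset.mem_insert_self j s))
    refine ⟨W, hW, (hWsub.trans Set.inter_subset_left).trans hVB, ?_⟩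
    simp only [Finset.mem_insert, forall_eq_or_imp]
    exact ⟨hWsub.trans Set.inter_subset_right,
      fun i hi => (hWsub.trans Set.inter_subset_left).trans (hVt i hi)⟩

lemma SelfIndulgent.exists_downCofinal_convStrong {ι : Type*} {F : Set (Set G)}
    (hsi : SelfIndulgent F) (s : Finset ι) (S : ι → Set G) (hS : ∀ i ∈ s, S i ∈ F)
    (y : ι → Set G → G) {F' : Set (Set G)} (hF' : DownCofinal F' F)
    (hy : ∀ i ∈ s, ∀ T ∈ F', y i T ∈ Sstar (S i)) :
    ∃ F'', DownCofinal F'' F' ∧ ∀ i ∈ s, ∃ a ∈ Sstar (S i), ConvStrong F F'' (y i) a := by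
  classical
  induction s using Finset.induction_on generalizing F' with
  | empty => exact ⟨F', DownCofinal.refl F', by simp⟩
  | insert j s _ ih =>
    obtain ⟨F₁, hF₁, hconv₁⟩ := ih (fun i hi => hS i (Finset.mem_insert_of_mem hi)) hF'
      fun i hi => hy i (Finset.mem_insert_of_mem hi)
    obtain ⟨a, ha, F'', hF'', hconv⟩ := hsi (S j) (hS j (Finset.mem_insert_self j s)) F₁
      (hF₁.trans hF') (y j) fun T hT => hy j (Finset.mem_insert_self j s) T (hF₁.1 hT)
    refine ⟨F'', hF''.trans hF₁, ?_⟩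
    simp only [Finset.mem_insert, forall_eq_or_imp]
    refine ⟨⟨a, ha, hconv⟩, fun i hi => ?_⟩
    obtain ⟨b, hb, hconvb⟩ := hconv₁ i hi
    exact ⟨b, hb, hconvb.of_downCofinal hF''⟩

lemma DownDirected.exists_forall_sub_mem_sstar {ι : Type*} {F F' : Set (Set G)}
    (hdir : DownDirected F) (hF' : DownCofinal F' F) (s : Finset ι) (y : ι → Set G → G)
    (a : ι → G) (hconv : ∀ i ∈ s, ConvStrong F F' (y i) (a i)) {U : Set G} (hU : U ∈ F) :
    ∃ T ∈ F', T ⊆ U ∧ ∀ i ∈ s, y i T - a i ∈ Sstar U := by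
  choose! T₀ hT₀ hT₀conv using fun i hi => hconv i hi U hU
  obtain ⟨V, hV, hVU, hVT₀⟩ :=
    hdir.exists_subset_forall_subset hU s T₀ fun i hi => hF'.1 (hT₀ i hi)
  obtain ⟨T, hT, hTV⟩ := hF'.2 V hV
  exact ⟨T, hT, hTV.trans hVU, fun i hi => hT₀conv i hi T hT (hTV.trans (hVT₀ i hi))⟩

end

theorem stmt2_general {G : Type*} [AddCommGroup G] (F : Set (Set G))
    (hdir : DownDirected F) (hsi : SelfIndulgent F)
    (hcond : ∀ g : G, g ≠ 0 → ∀ n : ℕ, 1 ≤ n →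
      ∃ S ∈ F, g ∉ ∑ _i ∈ Finset.range n, Sstar S)
    (g : G) (n : ℕ) (S : Fin n → Set G) (hS : ∀ i, S i ∈ F)
    (hgnot : g ∉ ∑ i : Fin n, Sstar (S i)) :
    ∃ Sn ∈ F, g ∉ (∑ i : Fin n, Sstar (S i)) + Sstar Sn := by
  by_contra! hmem
  have hdec : ∀ T ∈ F, ∃ y : Fin n → G, (∀ i, y i ∈ Sstar (S i)) ∧ g - ∑ i, y i ∈ Sstar T := by
    intro T hT
    obtain ⟨c, hc, t, ht, rfl⟩ := Set.mem_add.1 (hmem T hT)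
    obtain ⟨y, hy, rfl⟩ := (Set.mem_fintype_sum _ _).1 hc
    exact ⟨y, hy, by simpa using ht⟩
  choose! y hyS hyT using hdec
  obtain ⟨F'', hF'', hconv⟩ := hsi.exists_downCofinal_convStrong Finset.univ S (fun i _ => hS i)
    (fun i T => y T i) (DownCofinal.refl F) fun i _ T hT => hyS T hT i
  choose! a ha hconv using hconv
  have hga : g = ∑ i, a i := by
    by_contra hne
    obtain ⟨U, hU, hUnot⟩ := hcond _ (sub_ne_zero.2 hne) (n + 1) n.succ_pos
    obtain ⟨T, hT, hTU, hya⟩ := hdir.exists_forall_sub_mem_sstar hF'' Finset.univ _ a hconv hU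
    have hsplit : g - ∑ i, a i = ∑ i, (y T i - a i) + (g - ∑ i, y T i) := by
      rw [Finset.sum_sub_distrib]; abel
    apply hUnot
    rw [hsplit, Finset.sum_range_succ, ← Fin.sum_univ_eq_sum_range (fun _ => Sstar U) n]
    exact Set.add_mem_add
      (Set.finsetSum_mem_finsetSum _ _ _ fun i _ => hya i (Finset.mem_univ i))
      (sstar_mono hTU (hyT T (hF''.1 hT)))
  exact hgnot (hga ▸ Set.finsetSum_mem_finsetSum _ _ _ fun i _ => ha i (Finset.mem_univ i))

theorem stmt2 {G : Type*} [AddCommGroup G] (F : Set (Set G))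
    (hdir : DownDirected F) (hsi : SelfIndulgent F)
    (hcond : ∀ g : G, g ≠ 0 → ∀ n : ℕ, 1 ≤ n →
      ∃ S ∈ F, g ∉ ∑ _i ∈ Finset.range n, Sstar S)
    (g : G) (hg : g ≠ 0) (n : ℕ) (S : Fin n → Set G) (hS : ∀ i, S i ∈ F)
    (hgnot : g ∉ ∑ i : Fin n, Sstar (S i)) :
    ∃ Sn ∈ F, g ∉ (∑ i : Fin n, Sstar (S i)) + Sstar Sn :=
  stmt2_general F hdir hsi hcond g n S hS hgnot
end

section
/- Let G be the direct product group ∏_{n≥1} ℤ/nℤ, and for each integer m ≥ 1 let S(m) ⊆ G be the set of all elements whose i-th coordinate, for each 1 ≤ i ≤ m, lies in the image of {−1, 0, 1} in ℤ/iℤ (coordinates beyond the m-th being unrestricted). Then for every sequence m₀, m₁, m₂, … of positive integers, the sumset S(m₀)* + S(m₁)* + ⋯ + S(m_{m₀})* (with m₀ + 1 summands) equals all of G. -/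
/-! Write the `k`-th coordinate of `g` as its least residue `r_k < k`. Beyond `m₀` the coordinates
are unrestricted, so they are carried by one summand `t ∈ S(m₀)` vanishing on the first `m₀`
coordinates. On those, `r_k < k ≤ m₀`, so `g_k` is a sum of `m₀` unary digits `0`/`1`: the `i`-th
remaining summand has coordinate `1` exactly when `k ≤ m₀` and `i < r_k`, and lies in every `S(m)`. -/

open Pointwise

/-- The direct product group `∏_{n ≥ 1} ℤ/nℤ`. -/
abbrev Gprod : Type := ∀ i : ℕ+, ZMod i

/-- `S(m)`: the set of elements of `∏_{n ≥ 1} ℤ/nℤ` whose `i`-th coordinate, for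
`1 ≤ i ≤ m`, lies in the image of `{-1, 0, 1}` in `ℤ/iℤ`. -/
def Sm (m : ℕ+) : Set Gprod :=
  {g | ∀ i : ℕ+, i ≤ m → g i ∈ ({-1, 0, 1} : Set (ZMod i))}

open Finset

theorem Finset.sum_range_ite_lt_eq_natCast {R : Type*} [AddCommMonoidWithOne R] {a n : ℕ}
    (h : a ≤ n) : ∑ i ∈ range n, (if i < a then (1 : R) else 0) = a := by
  rw [sum_boole, (by ext; simp; omega : {i ∈ range n | i < a} = range a), card_range]

theorem subset_Sstar {G : Type*} [AddCommGroup G] (S : Set G) : S ⊆ Sstar S :=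
  fun _ h => Or.inl (Or.inl h)

def tailPart (n : ℕ) (g : Gprod) : Gprod := fun k => if (k : ℕ) ≤ n then 0 else g k

def unaryDigit (n : ℕ) (g : Gprod) (i : ℕ) : Gprod :=
  fun k => if (k : ℕ) ≤ n ∧ i < (g k).val then 1 else 0

theorem tailPart_mem_Sm (n : ℕ+) (g : Gprod) : tailPart n g ∈ Sm n := by
  intro k hk
  simp [tailPart, PNat.coe_le_coe _ _ |>.2 hk]

theorem unaryDigit_mem_Sm (n : ℕ) (g : Gprod) (i : ℕ) (m : ℕ+) : unaryDigit n g i ∈ Sm m := by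
  intro k _
  unfold unaryDigit
  split_ifs <;> simp

theorem sum_unaryDigit_add_tailPart (n : ℕ) (g : Gprod) :
    ∑ i ∈ range n, unaryDigit n g i + tailPart n g = g := by
  funext k
  have : NeZero (k : ℕ) := ⟨k.ne_zero⟩
  by_cases hk : (k : ℕ) ≤ n
  · have hval : (g k).val ≤ n := (ZMod.val_lt (g k)).le.trans hk
    simp only [Pi.add_apply, Finset.sum_apply, unaryDigit, tailPart, hk, true_and, if_true, add_zero]
    rw [sum_range_ite_lt_eq_natCast hval, ZMod.natCast_zmod_val]
  · simp [unaryDigit, tailPart, hk]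

theorem stmt5 (m : ℕ → ℕ+) :
    (∑ i ∈ Finset.range ((m 0 : ℕ) + 1), Sstar (Sm (m i))) = (Set.univ : Set Gprod) := by
  refine Set.eq_univ_of_forall fun g => ?_
  rw [sum_range_succ', ← sum_unaryDigit_add_tailPart (m 0) g]
  exact Set.add_mem_add
    (Set.finsetSum_mem_finsetSum _ _ _ fun i _ => subset_Sstar _ (unaryDigit_mem_Sm _ _ _ _))
    (subset_Sstar _ (tailPart_mem_Sm _ _))
end

section
/- Let G be the direct product group ∏_{n≥1} ℤ/nℤ, and for each integer m ≥ 1 let S(m) ⊆ G be the set of all elements whose i-th coordinate, for each 1 ≤ i ≤ m, lies in the image of {−1, 0, 1} in ℤ/iℤ. Then ⋃_{n≥1} ⋂_{m≥1} n·S(m)* is a proper subset of G; in fact every element g of this union has the property that, for some fixed n, every coordinate of g is the residue of an integer of absolute value at most n, and such elements form a proper subgroup of G. -/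
open Pointwise

/-- The set of elements `g` such that, for some fixed `n`, every coordinate of `g`
is the residue of an integer of absolute value at most `n`. -/
def Bounded : Set Gprod :=
  {g | ∃ n : ℕ, ∀ i : ℕ+, ∃ a : ℤ, |a| ≤ (n : ℤ) ∧ g i = (a : ZMod i)}

/-!
For `i ≤ m` the `i`-th coordinate of an element of `n • S(m)*` is a sum of `n` residues of
`-1, 0, 1`; taking `m = i` shows that elements of `⋂ m, n • S(m)*` are bounded by `n`. Bounds add
under addition, so bounded elements form a subgroup, and `(⌊i / 2⌋)ᵢ` is not bounded because `⌊i / 2⌋`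
is a residue of maximal distance from `0` in `ℤ/iℤ`.
-/

def intBall (R : Type*) [AddGroupWithOne R] (n : ℕ) : Set R :=
  {x | ∃ a : ℤ, |a| ≤ n ∧ x = a}

section intBall

variable {R : Type*} [AddGroupWithOne R]

lemma zero_mem_intBall (n : ℕ) : (0 : R) ∈ intBall R n :=
  ⟨0, by simp, by simp⟩

lemma neg_mem_intBall_iff {n : ℕ} {x : R} : -x ∈ intBall R n ↔ x ∈ intBall R n := by
  constructor
  · rintro ⟨a, ha, hx⟩
    exact ⟨-a, by rwa [abs_neg], by rw [Int.cast_neg, ← hx, neg_neg]⟩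
  · rintro ⟨a, ha, rfl⟩
    exact ⟨-a, by rwa [abs_neg], by simp⟩

lemma add_mem_intBall {k l : ℕ} {x y : R} (hx : x ∈ intBall R k) (hy : y ∈ intBall R l) :
    x + y ∈ intBall R (k + l) := by
  obtain ⟨a, ha, rfl⟩ := hx
  obtain ⟨b, hb, rfl⟩ := hy
  refine ⟨a + b, ?_, by push_cast; rfl⟩
  calc |a + b| ≤ |a| + |b| := abs_add_le a b
    _ ≤ ((k + l : ℕ) : ℤ) := by push_cast; exact add_le_add ha hb

lemma insert_neg_one_zero_one_subset_intBall : ({-1, 0, 1} : Set R) ⊆ intBall R 1 := by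
  rintro x (rfl | rfl | rfl)
  · exact ⟨-1, by simp, by simp⟩
  · exact zero_mem_intBall 1
  · exact ⟨1, by simp, by simp⟩

end intBall

lemma Sstar_subset {G : Type*} [AddCommGroup G] {S T : Set G} (hS : S ⊆ T) (h0 : (0 : G) ∈ T)
    (hT : -T = T) : Sstar S ⊆ T :=
  Set.union_subset (Set.union_subset hS (Set.singleton_subset_iff.mpr h0))
    (hT ▸ Set.neg_subset_neg.mpr hS)

lemma nsmul_subset_of_add_subset {A : Type*} [AddMonoid A] {S : Set A} {T : ℕ → Set A}
    (h0 : (0 : A) ∈ T 0) (hS : S ⊆ T 1) (hT : ∀ k l, T k + T l ⊆ T (k + l)) (n : ℕ) :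
    n • S ⊆ T n := by
  induction n with
  | zero => simpa using h0
  | succ n ih =>
    rw [succ_nsmul]
    exact (Set.add_subset_add ih hS).trans (hT n 1)

def coordBall (i : ℕ+) (n : ℕ) : Set Gprod := {g | g i ∈ intBall (ZMod i) n}

lemma neg_coordBall (i : ℕ+) (n : ℕ) : -coordBall i n = coordBall i n := by
  ext g
  exact neg_mem_intBall_iff

lemma Sstar_Sm_subset_coordBall {i m : ℕ+} (hi : i ≤ m) : Sstar (Sm m) ⊆ coordBall i 1 :=
  Sstar_subset (fun _ hg => insert_neg_one_zero_one_subset_intBall (hg i hi))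
    (zero_mem_intBall 1) (neg_coordBall i 1)

lemma nsmul_Sstar_Sm_subset_coordBall {i m : ℕ+} (hi : i ≤ m) (n : ℕ) :
    n • Sstar (Sm m) ⊆ coordBall i n :=
  nsmul_subset_of_add_subset (T := coordBall i) (zero_mem_intBall 0)
    (Sstar_Sm_subset_coordBall hi)
    (fun _ _ => by rintro _ ⟨x, hx, y, hy, rfl⟩; exact add_mem_intBall hx hy) n

lemma iUnion_iInter_sumset_subset_bounded :
    (⋃ (n : ℕ) (_ : 1 ≤ n), ⋂ m : ℕ+, ∑ _i ∈ Finset.range n, Sstar (Sm m)) ⊆ Bounded := by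
  intro g hg
  obtain ⟨n, -, hg⟩ := Set.mem_iUnion₂.mp hg
  refine ⟨n, fun i => ?_⟩
  have hgi := Set.mem_iInter.mp hg i
  rw [Finset.sum_const, Finset.card_range] at hgi
  exact nsmul_Sstar_Sm_subset_coordBall le_rfl n hgi

def boundedAddSubgroup : AddSubgroup Gprod where
  carrier := Bounded
  zero_mem' := ⟨0, fun _ => zero_mem_intBall 0⟩
  add_mem' := by
    rintro x y ⟨k, hx⟩ ⟨l, hy⟩
    exact ⟨k + l, fun i => add_mem_intBall (hx i) (hy i)⟩
  neg_mem' := by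
    rintro x ⟨n, hx⟩
    exact ⟨n, fun i => neg_mem_intBall_iff.mpr (hx i)⟩

lemma half_not_mem_bounded : (fun i : ℕ+ => ((i / 2 : ℕ) : ZMod i)) ∉ Bounded := by
  rintro ⟨n, hn⟩
  obtain ⟨a, ha, he⟩ := hn ⟨2 * n + 2, by omega⟩
  change (((2 * n + 2) / 2 : ℕ) : ZMod (2 * n + 2)) = a at he
  rw [show (2 * n + 2) / 2 = n + 1 by omega] at he
  have hmin := ZMod.natAbs_min_of_le_div_two (2 * n + 2) (n + 1) a (mod_cast he) (by omega)
  rw [Int.abs_eq_natAbs] at ha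
  omega

theorem stmt6 :
    (⋃ (n : ℕ) (_ : 1 ≤ n), ⋂ m : ℕ+, ∑ _i ∈ Finset.range n, Sstar (Sm m)) ≠ Set.univ ∧
    (⋃ (n : ℕ) (_ : 1 ≤ n), ⋂ m : ℕ+, ∑ _i ∈ Finset.range n, Sstar (Sm m)) ⊆ Bounded ∧
    (∃ H : AddSubgroup Gprod, (H : Set Gprod) = Bounded) ∧
    Bounded ≠ Set.univ := by
  have hBounded : Bounded ≠ Set.univ :=
    Set.ne_univ_iff_exists_notMem _ |>.mpr ⟨_, half_not_mem_bounded⟩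
  refine ⟨fun h => hBounded ?_, iUnion_iInter_sumset_subset_bounded,
    ⟨boundedAddSubgroup, rfl⟩, hBounded⟩
  exact Set.eq_univ_of_univ_subset (h ▸ iUnion_iInter_sumset_subset_bounded)
end

section
/- For each integer k ≥ 1, let S(k) = {x ∈ ℤ : x ≡ 0 (mod 3^k) or x² ≡ 7 (mod 3^k)}. Then for every g ∈ ℤ with g ≠ 0 and every integer n ≥ 1, there exists k ≥ 1 such that g does not lie in the n-fold sumset n·S(k)* = S(k)* + ⋯ + S(k)*. -/
open Pointwise

/-- `S(k) = {x ∈ ℤ : x ≡ 0 (mod 3^k) or x² ≡ 7 (mod 3^k)}`. -/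
def SZ (k : ℕ) : Set ℤ :=
  {x : ℤ | ((3 : ℤ) ^ k ∣ x) ∨ Int.ModEq ((3 : ℤ) ^ k) (x ^ 2) 7}

/-!
Fix `k` with `3 ^ k > g ^ 2 + 7 n ^ 2` and put `P = 3 ^ k`. Since `S(k)` is symmetric and contains
`0`, `S(k)* = S(k)`. If `7` has a square root `r` modulo `P`, then `3 ∤ r`, so every other square
root is `±r` modulo `P`; hence each element of `S(k)` is `e r` modulo `P` with `|e| ≤ 1`, and a sum
`g` of `n` of them is `a r` with `|a| ≤ n`, giving `g ^ 2 ≡ 7 a ^ 2 (mod P)`. Otherwise `S(k)` is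
just `P ℤ` and `P ∣ g`. In both cases `|g ^ 2 - 7 a ^ 2| < P` forces `g ^ 2 = 7 a ^ 2`, and as `7`
is not a rational square, `g = 0`.
-/

theorem Int.modEq_or_modEq_neg_of_sq_modEq_sq {p r x : ℤ} {k : ℕ} (hp : Prime p)
    (hp2 : ¬ p ∣ 2) (hr : ¬ p ∣ r) (h : x ^ 2 ≡ r ^ 2 [ZMOD p ^ k]) :
    x ≡ r [ZMOD p ^ k] ∨ x ≡ -r [ZMOD p ^ k] := by
  simp only [Int.modEq_iff_dvd] at h ⊢
  have hprod : p ^ k ∣ (r - x) * (-r - x) := by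
    rw [show (r - x) * (-r - x) = -(r ^ 2 - x ^ 2) by ring]
    exact h.neg_right
  by_cases hpx : p ∣ r - x
  · left
    have hpx' : ¬ p ∣ -r - x := fun hpx' ↦ by
      have : p ∣ 2 * r := by
        rw [show 2 * r = (r - x) - (-r - x) by ring]
        exact dvd_sub hpx hpx'
      exact (hp.dvd_or_dvd this).elim hp2 hr
    exact ((hp.coprime_iff_not_dvd.2 hpx').pow_left).dvd_of_dvd_mul_right hprod
  · right
    exact ((hp.coprime_iff_not_dvd.2 hpx).pow_left).dvd_of_dvd_mul_left hprod

theorem Sstar_eq_self {G : Type*} [AddCommGroup G] {S : Set G} (h0 : (0 : G) ∈ S)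
    (hneg : ∀ x ∈ S, -x ∈ S) : Sstar S = S := by
  refine subset_antisymm ?_ (Set.subset_union_left.trans Set.subset_union_left)
  rintro x ((hx | rfl) | hx)
  exacts [hx, h0, neg_neg x ▸ hneg _ hx]

theorem Sstar_SZ (k : ℕ) : Sstar (SZ k) = SZ k :=
  Sstar_eq_self (Or.inl (dvd_zero _)) fun x hx ↦ by
    rcases hx with hx | hx
    · exact Or.inl hx.neg_right
    · exact Or.inr (by rwa [neg_sq])

theorem not_three_dvd_of_sq_modEq_seven {k : ℕ} (hk : 1 ≤ k) {r : ℤ}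
    (hr : r ^ 2 ≡ 7 [ZMOD 3 ^ k]) : ¬ (3 : ℤ) ∣ r := fun h3 ↦ by
  have h : r ^ 2 ≡ 7 [ZMOD 3] := hr.of_dvd (dvd_pow_self 3 (by omega))
  have : (3 : ℤ) ∣ 7 :=
    Int.modEq_zero_iff_dvd.1 (h.symm.trans (Int.modEq_zero_iff_dvd.2 (dvd_pow h3 two_ne_zero)))
  norm_num at this

theorem exists_modEq_mul_of_mem_SZ {k : ℕ} (hk : 1 ≤ k) {r x : ℤ}
    (hr : r ^ 2 ≡ 7 [ZMOD 3 ^ k]) (hx : x ∈ SZ k) :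
    ∃ e : ℤ, |e| ≤ 1 ∧ x ≡ e * r [ZMOD 3 ^ k] := by
  rcases hx with hx | hx
  · exact ⟨0, by simp, by simpa using (Int.modEq_zero_iff_dvd.2 hx)⟩
  · rcases Int.modEq_or_modEq_neg_of_sq_modEq_sq Int.prime_three (by norm_num)
      (not_three_dvd_of_sq_modEq_seven hk hr) (hx.trans hr.symm) with h | h
    · exact ⟨1, by simp, by simpa using h⟩
    · exact ⟨-1, by simp, by simpa using h⟩

theorem exists_modEq_mul_of_mem_sum {A : Set ℤ} {m r : ℤ}
    (hA : ∀ x ∈ A, ∃ e : ℤ, |e| ≤ 1 ∧ x ≡ e * r [ZMOD m]) (n : ℕ) :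
    ∀ g ∈ ∑ _i ∈ Finset.range n, A, ∃ a : ℤ, |a| ≤ n ∧ g ≡ a * r [ZMOD m] := by
  induction n with
  | zero =>
    intro g hg
    rw [Finset.sum_range_zero, Set.mem_zero] at hg
    exact ⟨0, by simp, by simp [hg]⟩
  | succ n ih =>
    intro g hg
    rw [Finset.sum_range_succ, Set.mem_add] at hg
    obtain ⟨y, hy, x, hx, rfl⟩ := hg
    obtain ⟨a, ha, hya⟩ := ih y hy
    obtain ⟨e, he, hxe⟩ := hA x hx
    refine ⟨a + e, ?_, by simpa only [add_mul] using hya.add hxe⟩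
    calc |a + e| ≤ |a| + |e| := abs_add_le a e
      _ ≤ (n + 1 : ℕ) := by push_cast; linarith

theorem exists_sq_modEq_seven_mul_sq_of_mem_sum {k n : ℕ} (hk : 1 ≤ k) {g : ℤ}
    (hg : g ∈ ∑ _i ∈ Finset.range n, SZ k) :
    ∃ a : ℤ, |a| ≤ n ∧ g ^ 2 ≡ 7 * a ^ 2 [ZMOD 3 ^ k] := by
  by_cases hroot : ∃ r : ℤ, r ^ 2 ≡ 7 [ZMOD 3 ^ k]
  · obtain ⟨r, hr⟩ := hroot
    obtain ⟨a, ha, hga⟩ :=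
      exists_modEq_mul_of_mem_sum (fun _ ↦ exists_modEq_mul_of_mem_SZ hk hr) n g hg
    refine ⟨a, ha, ?_⟩
    calc g ^ 2 ≡ a ^ 2 * r ^ 2 [ZMOD 3 ^ k] := by simpa only [mul_pow] using hga.pow 2
      _ ≡ a ^ 2 * 7 [ZMOD 3 ^ k] := hr.mul_left _
      _ = 7 * a ^ 2 := mul_comm _ _
  · have hA : ∀ x ∈ SZ k, ∃ e : ℤ, |e| ≤ 1 ∧ x ≡ e * 0 [ZMOD 3 ^ k] := fun x hx ↦
      ⟨0, by simp, by simpa using Int.modEq_zero_iff_dvd.2 (hx.resolve_right fun h ↦ hroot ⟨x, h⟩)⟩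
    obtain ⟨_, -, hg0⟩ := exists_modEq_mul_of_mem_sum hA n g hg
    exact ⟨0, by simp, by simpa using (hg0.pow 2)⟩

theorem eq_zero_of_sq_eq_seven_mul_sq {g a : ℤ} (h : g ^ 2 = 7 * a ^ 2) : g = 0 := by
  have ha : a = 0 := by
    by_contra ha
    have : IsSquare (7 : ℚ) := ⟨g / a, by field_simp; exact_mod_cast h.symm⟩
    norm_num at this
  simpa [ha] using h

theorem stmt7 :
    ∀ g : ℤ, g ≠ 0 → ∀ n : ℕ, 1 ≤ n →
      ∃ k : ℕ, 1 ≤ k ∧ g ∉ ∑ _i ∈ Finset.range n, Sstar (SZ k) := by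
  intro g hg n _
  set k := g.natAbs ^ 2 + 7 * n ^ 2 + 1
  have hbound : g ^ 2 + 7 * (n : ℤ) ^ 2 < 3 ^ k := by
    have : k < 3 ^ k := Nat.lt_pow_self (by norm_num)
    zify [k] at this
    simp only [sq_abs] at this
    linarith
  refine ⟨k, by omega, fun hmem ↦ hg ?_⟩
  rw [Sstar_SZ] at hmem
  obtain ⟨a, ha, hga⟩ := exists_sq_modEq_seven_mul_sq_of_mem_sum (by omega) hmem
  refine eq_zero_of_sq_eq_seven_mul_sq (a := a) (sub_eq_zero.1 ?_)
  refine Int.eq_zero_of_abs_lt_dvd (Int.ModEq.dvd hga.symm) ?_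
  have ha2 : a ^ 2 ≤ (n : ℤ) ^ 2 := sq_le_sq' (abs_le.1 ha).1 (abs_le.1 ha).2
  rw [abs_lt]
  constructor <;> nlinarith [sq_nonneg g, sq_nonneg a]
end

section
/- For each integer k ≥ 1, let S(k) = {x ∈ ℤ : x ≡ 0 (mod 3^k) or x² ≡ 7 (mod 3^k)}. Then for every sequence m₀, m₁, m₂, … of positive integers, the sumset S(m₀)* + S(m₁)* + ⋯ + S(m_{3^{m₀}})* (with 3^{m₀} + 1 summands) equals all of ℤ. Consequently, for every sequence of members of the downward directed family F = {S(k) : k ≥ 1}, the set U(S(m₀), S(m₁), …) equals ℤ. -/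
open Pointwise

/-- `U(S₀,S₁,…) = ⋃ₙ (S₀* + ⋯ + S_{n-1}*)`, the `n = 0` term being `{0}`. -/
def Uset {G : Type*} [AddCommGroup G] (S : ℕ → Set G) : Set G :=
  ⋃ n : ℕ, ∑ i ∈ Finset.range n, Sstar (S i)

/-! Since `7 ≡ 1 (mod 3)`, Hensel lifting gives an integer `a` with `a² ≡ 7` modulo every
`3^(m i)` occurring in the sum, so `a` lies in each `S(m i)`; moreover `a` is prime to `3`.
Hence every integer `t` can be written `t = j a + d` with `0 ≤ j < 3^(m 0)` and `3^(m 0) ∣ d`: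
put `d ∈ S(m 0)` in the first summand and `a` in `j` of the remaining `3^(m 0)` summands. -/

open Finset

section Sstar

variable {G : Type*} [AddCommGroup G]

lemma self_subset_Sstar (S : Set G) : S ⊆ Sstar S :=
  fun _ hx => Or.inl (Or.inl hx)

lemma zero_mem_Sstar (S : Set G) : (0 : G) ∈ Sstar S :=
  Or.inl (Or.inr rfl)

lemma nsmul_mem_sum_range {T : ℕ → Set G} {a : G} (h0 : ∀ i, (0 : G) ∈ T i) :
    ∀ {N j : ℕ}, (∀ i < N, a ∈ T i) → j ≤ N → j • a ∈ ∑ i ∈ range N, T i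
  | 0, j, _, hj => by simp [Nat.le_zero.mp hj, Set.mem_zero]
  | N + 1, j, ha, hj => by
    rw [sum_range_succ]
    rcases Nat.lt_or_eq_of_le hj with hj | rfl
    · simpa using Set.add_mem_add
        (nsmul_mem_sum_range h0 (fun i hi => ha i (by omega)) (Nat.le_of_lt_succ hj)) (h0 N)
    · rw [succ_nsmul]
      exact Set.add_mem_add (nsmul_mem_sum_range h0 (fun i hi => ha i (by omega)) le_rfl)
        (ha N N.lt_succ_self)

lemma sum_range_subset_Uset (S : ℕ → Set G) (n : ℕ) :
    ∑ i ∈ range n, Sstar (S i) ⊆ Uset S :=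
  Set.subset_iUnion (fun n => ∑ i ∈ range n, Sstar (S i)) n

end Sstar

/-- Newton step: `2a · a ≡ 14 ≡ -1 (mod 3)`, so `a (1 + 3^(k+1) c)` corrects
`a² = 7 + 3^(k+1) c`. -/
lemma exists_sq_modEq_seven (k : ℕ) : ∃ a : ℤ, a ^ 2 ≡ 7 [ZMOD 3 ^ (k + 1)] := by
  induction k with
  | zero => exact ⟨1, by decide⟩
  | succ k ih =>
    obtain ⟨a, ha⟩ := ih
    obtain ⟨c, hc⟩ := ha.symm.dvd
    refine ⟨a * (1 + 3 ^ (k + 1) * c),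
      Int.modEq_iff_dvd.mpr ⟨-c * (5 + 2 * 3 ^ k * c + a ^ 2 * 3 ^ k * c), ?_⟩⟩
    linear_combination (-(1 + 6 * 3 ^ k * c)) * hc

lemma isCoprime_three_pow_of_sq_modEq_seven {a : ℤ} {k : ℕ}
    (ha : a ^ 2 ≡ 7 [ZMOD 3 ^ (k + 1)]) (n : ℕ) : IsCoprime ((3 : ℤ) ^ n) a := by
  obtain ⟨c, hc⟩ := (ha.of_dvd (dvd_pow_self 3 k.succ_ne_zero) : a ^ 2 ≡ 7 [ZMOD 3]).symm.dvd
  exact IsCoprime.pow_left ⟨-(2 + c), a, by linear_combination hc⟩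

lemma mem_SZ_of_sq_modEq {a : ℤ} {k K : ℕ} (hkK : k ≤ K) (ha : a ^ 2 ≡ 7 [ZMOD 3 ^ K]) :
    a ∈ SZ k :=
  Or.inr (Int.ModEq.of_dvd (pow_dvd_pow 3 hkK) ha)

lemma exists_lt_dvd_sub_mul {n : ℕ} (hn : 0 < n) {a : ℤ} (ha : IsCoprime (n : ℤ) a)
    (t : ℤ) :
    ∃ j < n, (n : ℤ) ∣ t - j * a := by
  obtain ⟨u, v, huv⟩ := ha
  have hq := Int.mul_ediv_add_emod (t * v) n
  have hr₀ := Int.emod_nonneg (t * v) (by omega : (n : ℤ) ≠ 0)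
  have hr₁ := Int.emod_lt_of_pos (t * v) (by omega : (0 : ℤ) < n)
  refine ⟨((t * v) % n).toNat, by omega, t * u + (t * v) / n * a, ?_⟩
  rw [Int.toNat_of_nonneg hr₀]
  linear_combination -t * huv - a * hq

theorem stmt8_general (m : ℕ → ℕ) :
    (∑ i ∈ Finset.range (3 ^ m 0 + 1), Sstar (SZ (m i))) = (Set.univ : Set ℤ) ∧
    Uset (fun i => SZ (m i)) = (Set.univ : Set ℤ) := by
  have hsum : (∑ i ∈ range (3 ^ m 0 + 1), Sstar (SZ (m i))) = Set.univ := by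
    obtain ⟨a, ha⟩ := exists_sq_modEq_seven ((range (3 ^ m 0 + 1)).sup m)
    refine Set.eq_univ_of_forall fun t => ?_
    obtain ⟨j, hj, d, hd⟩ := exists_lt_dvd_sub_mul (n := 3 ^ m 0) (by positivity)
      (by exact_mod_cast isCoprime_three_pow_of_sq_modEq_seven ha (m 0)) t
    have ha_mem : ∀ i < 3 ^ m 0, a ∈ Sstar (SZ (m (i + 1))) := fun i hi =>
      self_subset_Sstar _ <| mem_SZ_of_sq_modEq
        ((le_sup (mem_range.mpr (by omega))).trans (Nat.le_succ _)) ha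
    have hd_mem : (3 : ℤ) ^ m 0 * d ∈ Sstar (SZ (m 0)) :=
      self_subset_Sstar _ (Or.inl ⟨d, rfl⟩)
    have ht : t = j • a + 3 ^ m 0 * d := by
      rw [nsmul_eq_mul]; push_cast at hd; linarith
    rw [sum_range_succ', ht]
    exact Set.add_mem_add (nsmul_mem_sum_range (fun _ => zero_mem_Sstar _) ha_mem hj.le) hd_mem
  exact ⟨hsum, Set.eq_univ_of_univ_subset (hsum ▸ sum_range_subset_Uset _ _)⟩

theorem stmt8 (m : ℕ → ℕ) (hm : ∀ i, 1 ≤ m i) :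
    (∑ i ∈ Finset.range (3 ^ m 0 + 1), Sstar (SZ (m i))) = (Set.univ : Set ℤ) ∧
    Uset (fun i => SZ (m i)) = (Set.univ : Set ℤ) :=
  stmt8_general m
end

section
/- Let G be a group, X an infinite subset of G, and κ a regular infinite cardinal with κ ≤ card(X). Then the co-κ filter F on X is self-indulgent as a family of subsets of G. Moreover, if X is invariant under conjugation by elements of G, then F is closed under conjugation by elements of G (for all S ∈ F and g ∈ G, gSg⁻¹ ∈ F). -/
open Pointwise

universe u

/-- `S* = S ∪ {e} ∪ S⁻¹`. -/
def SstarM {G : Type u} [Group G] (S : Set G) : Set G := S ∪ {1} ∪ S⁻¹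

/-- `F'` is a downward cofinal subset of `F` (ordered by inclusion). -/
def DownCofinalM {G : Type u} [Group G] (F' F : Set (Set G)) : Prop :=
  F' ⊆ F ∧ ∀ S ∈ F, ∃ T ∈ F', T ⊆ S

/-- The family `(x T)_{T ∈ F''}`, indexed by `F''` ordered (downward) by inclusion,
converges strongly to `a` with respect to `F`: for every `S ∈ F` there is an index
`T ∈ F''` with `x T' * a⁻¹ ∈ S*` for every index `T' ∈ F''` with `T' ⊆ T`. -/
def ConvStrongM {G : Type u} [Group G] (F F'' : Set (Set G)) (x : Set G → G)
    (a : G) : Prop :=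
  ∀ S ∈ F, ∃ T ∈ F'', ∀ T' ∈ F'', T' ⊆ T → x T' * a⁻¹ ∈ SstarM S

/-- `F` is self-indulgent. -/
def SelfIndulgentM {G : Type u} [Group G] (F : Set (Set G)) : Prop :=
  ∀ S ∈ F, ∀ F' : Set (Set G), DownCofinalM F' F →
    ∀ x : Set G → G, (∀ T ∈ F', x T ∈ SstarM S) →
      ∃ a ∈ SstarM S, ∃ F'' : Set (Set G), DownCofinalM F'' F' ∧ ConvStrongM F F'' x a

/-- The conjugate `g S g⁻¹` of a subset `S`. -/
def conjSet {G : Type u} [Group G] (g : G) (S : Set G) : Set G :=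
  (fun x => g * x * g⁻¹) '' S

/-!
If some value `a ∈ S*` is taken by the net `x` on a cofinal set of indices, the constant subnet
with value `a` converges to `a`. Otherwise every `a` has an index set `V a ∈ F` below which the
net avoids `a`. Given `U ∈ F`, the elements of `S*` outside `U*` lie in `(S \ U) ∪ (S \ U)⁻¹`,
a set of fewer than `κ` points, so by regularity of `κ` the intersection of the corresponding
`V a` is still in `F`; below it the net stays in `U*`, i.e. it converges strongly to `1`.
-/

open Cardinal

def coCardinal {α : Type u} (X : Set α) (κ : Cardinal.{u}) : Set (Set α) :=
  {S | S ⊆ X ∧ #↥(X \ S) < κ}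

section coCardinal

variable {α : Type u} {X : Set α} {κ : Cardinal.{u}}

theorem self_mem_coCardinal (hκ : 0 < κ) : X ∈ coCardinal X κ :=
  ⟨subset_rfl, by simpa using hκ⟩

theorem inter_iInter_mem_coCardinal (hκ : κ.IsRegular) {ι : Type u} (hι : #ι < κ)
    {V : ι → Set α} (hV : ∀ i, V i ∈ coCardinal X κ) :
    X ∩ ⋂ i, V i ∈ coCardinal X κ := by
  refine ⟨Set.inter_subset_left, ?_⟩
  rw [Set.sdiff_self_inter, Set.sdiff_iInter,
    card_iUnion_lt_iff_forall_of_isRegular hκ hι]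
  exact fun i => (hV i).2

end coCardinal

section Group

variable {G : Type u} [Group G]

theorem one_mem_SstarM (S : Set G) : (1 : G) ∈ SstarM S :=
  Or.inl (Or.inr rfl)

theorem SstarM_subset_union_diff (S U : Set G) :
    SstarM S ⊆ SstarM U ∪ ((S \ U) ∪ (S \ U)⁻¹) := by
  rintro y ((hy | hy) | hy)
  · by_cases hyU : y ∈ U
    · exact Or.inl (Or.inl (Or.inl hyU))
    · exact Or.inr (Or.inl ⟨hy, hyU⟩)
  · exact Or.inl (Or.inl (Or.inr hy))
  · by_cases hyU : y⁻¹ ∈ U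
    · exact Or.inl (Or.inr hyU)
    · exact Or.inr (Or.inr ⟨hy, hyU⟩)

theorem exists_convStrong_of_frequently_eq {F F' : Set (Set G)} (hF' : DownCofinalM F' F)
    {x : Set G → G} {a : G} (ha : ∀ V ∈ F', ∃ T ∈ F', T ⊆ V ∧ x T = a) :
    ∃ F'', DownCofinalM F'' F' ∧ ConvStrongM F F'' x a := by
  refine ⟨{T | T ∈ F' ∧ x T = a}, ⟨fun T hT => hT.1, fun V hV => ?_⟩, fun U hU => ?_⟩
  · obtain ⟨T, hT, hTV, hxT⟩ := ha V hV
    exact ⟨T, ⟨hT, hxT⟩, hTV⟩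
  · obtain ⟨V, hV, -⟩ := hF'.2 U hU
    obtain ⟨T, hT, -, hxT⟩ := ha V hV
    refine ⟨T, ⟨hT, hxT⟩, fun T' hT' _ => ?_⟩
    rw [hT'.2, mul_inv_cancel]
    exact one_mem_SstarM U

variable {X : Set G} {κ : Cardinal.{u}}

theorem convStrong_one_of_eventually_ne (hκ : κ.IsRegular) {S : Set G} (hSX : S ⊆ X)
    {F' : Set (Set G)} (hF' : DownCofinalM F' (coCardinal X κ))
    {x : Set G → G} (hx : ∀ T ∈ F', x T ∈ SstarM S)
    (hne : ∀ a ∈ SstarM S, ∃ V ∈ F', ∀ T ∈ F', T ⊆ V → x T ≠ a) :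
    ConvStrongM (coCardinal X κ) F' x 1 := by
  have hV : ∀ a, ∃ V ∈ coCardinal X κ, ∀ T ∈ F', T ⊆ V → x T ≠ a := by
    intro a
    by_cases haS : a ∈ SstarM S
    · obtain ⟨V, hV, hVa⟩ := hne a haS
      exact ⟨V, hF'.1 hV, hVa⟩
    · exact ⟨X, self_mem_coCardinal hκ.pos, fun T hT _ h => haS (h ▸ hx T hT)⟩
  choose V hVmem hVne using hV
  intro U hU
  set B : Set G := (S \ U) ∪ (S \ U)⁻¹
  have hSU : #↥(S \ U) < κ :=
    (mk_le_mk_of_subset (Set.sdiff_subset_sdiff_left hSX)).trans_lt hU.2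
  have hB : #↥B < κ :=
    (mk_union_le _ _).trans_lt (by rw [mk_inv]; exact add_lt_of_lt hκ.aleph0_le hSU hSU)
  obtain ⟨T, hT, hTW⟩ :=
    hF'.2 _ (inter_iInter_mem_coCardinal hκ hB (V := fun b : B => V b) fun b => hVmem b)
  refine ⟨T, hT, fun T' hT' hT'T => ?_⟩
  have hxB : x T' ∉ B := fun hb =>
    hVne _ T' hT' (hT'T.trans <| hTW.trans <| Set.inter_subset_right.trans <|
      Set.iInter_subset (fun b : B => V b) ⟨_, hb⟩) rfl
  rw [inv_one, mul_one]
  exact ((SstarM_subset_union_diff S U) (hx T' hT')).resolve_right hxB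

theorem selfIndulgent_coCardinal (hκ : κ.IsRegular) :
    SelfIndulgentM (coCardinal X κ) := by
  intro S hS F' hF' x hx
  by_cases hfreq : ∃ a ∈ SstarM S, ∀ V ∈ F', ∃ T ∈ F', T ⊆ V ∧ x T = a
  · obtain ⟨a, haS, ha⟩ := hfreq
    exact ⟨a, haS, exists_convStrong_of_frequently_eq hF' ha⟩
  · push Not at hfreq
    exact ⟨1, one_mem_SstarM S, F', ⟨subset_rfl, fun T hT => ⟨T, hT, subset_rfl⟩⟩,
      convStrong_one_of_eventually_ne hκ hS.1 hF' hx hfreq⟩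

theorem conjSet_mem_coCardinal (hX : ∀ g : G, ∀ x ∈ X, g * x * g⁻¹ ∈ X)
    {S : Set G} (hS : S ∈ coCardinal X κ) (g : G) : conjSet g S ∈ coCardinal X κ := by
  have hinj : Function.Injective fun x : G => g * x * g⁻¹ :=
    (mul_left_injective g⁻¹).comp (mul_right_injective g)
  have hXconj : conjSet g X = X := by
    refine (Set.image_subset_iff.2 fun y hy => hX g y hy).antisymm fun y hy => ?_
    exact ⟨g⁻¹ * y * g, by simpa using hX g⁻¹ y hy, by group⟩
  refine ⟨hXconj ▸ Set.image_mono hS.1, ?_⟩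
  rw [← hXconj, conjSet, conjSet, ← Set.image_sdiff hinj, mk_image_eq hinj]
  exact hS.2

end Group

theorem stmt15_general {G : Type u} [Group G] (X : Set G)
    (κ : Cardinal.{u}) (hreg : κ.IsRegular) :
    SelfIndulgentM {S : Set G | S ⊆ X ∧ Cardinal.mk ↥(X \ S) < κ} ∧
    ((∀ g : G, ∀ x ∈ X, g * x * g⁻¹ ∈ X) →
      ∀ S ∈ {S : Set G | S ⊆ X ∧ Cardinal.mk ↥(X \ S) < κ}, ∀ g : G,
        conjSet g S ∈ {S : Set G | S ⊆ X ∧ Cardinal.mk ↥(X \ S) < κ}) :=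
  ⟨selfIndulgent_coCardinal hreg, fun hX _ hS g => conjSet_mem_coCardinal hX hS g⟩

theorem stmt15 {G : Type u} [Group G] (X : Set G) (hX : X.Infinite)
    (κ : Cardinal.{u}) (hreg : κ.IsRegular) (hκ : κ ≤ Cardinal.mk X) :
    SelfIndulgentM {S : Set G | S ⊆ X ∧ Cardinal.mk ↥(X \ S) < κ} ∧
    ((∀ g : G, ∀ x ∈ X, g * x * g⁻¹ ∈ X) →
      ∀ S ∈ {S : Set G | S ⊆ X ∧ Cardinal.mk ↥(X \ S) < κ}, ∀ g : G,
        conjSet g S ∈ {S : Set G | S ⊆ X ∧ Cardinal.mk ↥(X \ S) < κ}) :=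
  stmt15_general X κ hreg
end
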